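/- arXiv:2102.05954 — 3 statements merged into one kernel-verified Lean document; each statement's English description precedes it below -/
import Mathlib

section
/- The set function f_D(S) = log det(cI + Σ_{i∈S} φᵢφᵢᵀ) is submodular: for all S ⊆ T and any index k ∉ T, f_D(S ∪ {k}) - f_D(S) ≥ f_D(T ∪ {k}) - f_D(T). -/
/-!
Adding `φₖ φₖᵀ` to a positive definite `M` multiplies `det M` by `1 + φₖᵀ M⁻¹ φₖ` (matrix
determinant lemma), so with `M_A = c I + ∑_{i ∈ A} φᵢ φᵢᵀ` the marginal gain of `k` at `A` is
`log (1 + φₖᵀ M_A⁻¹ φₖ)`. For `S ⊆ T` we have `M_T = M_S + P` with `P` positive semidefinite,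
and `M ↦ vᵀ M⁻¹ v` is antitone in the Loewner order because `vᵀ M⁻¹ v = max_x (2 xᵀ v - xᵀ M x)`.
-/

open Matrix

theorem Matrix.det_add_vecMulVec {m R : Type*} [Fintype m] [DecidableEq m] [CommRing R]
    {A : Matrix m m R} (hA : IsUnit A.det) (u v : m → R) :
    (A + vecMulVec u v).det = A.det * (1 + v ⬝ᵥ A⁻¹ *ᵥ u) := by
  rw [vecMulVec_eq Unit, det_add_replicateCol_mul_replicateRow hA, Matrix.mul_assoc,
    ← replicateCol_mulVec, det_unique (n := Unit)]
  simp

theorem Matrix.IsHermitian.dotProduct_mulVec_comm {m R : Type*} [Fintype m] [CommSemiring R]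
    [StarRing R] [TrivialStar R] {M : Matrix m m R} (hM : M.IsHermitian) (x y : m → R) :
    x ⬝ᵥ M *ᵥ y = y ⬝ᵥ M *ᵥ x := by
  rw [dotProduct_mulVec, ← mulVec_transpose, ← conjTranspose_eq_transpose_of_trivial, hM.eq,
    dotProduct_comm]

namespace Matrix.PosDef

variable {m : Type*} [Fintype m] [DecidableEq m] {M : Matrix m m ℝ}

theorem mulVec_inv_mulVec (hM : M.PosDef) (v : m → ℝ) : M *ᵥ (M⁻¹ *ᵥ v) = v := by
  rw [mulVec_mulVec, mul_nonsing_inv _ (isUnit_iff_ne_zero.mpr hM.det_pos.ne'), one_mulVec]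

theorem dotProduct_inv_mulVec_nonneg (hM : M.PosDef) (v : m → ℝ) : 0 ≤ v ⬝ᵥ M⁻¹ *ᵥ v := by
  simpa using hM.inv.posSemidef.dotProduct_mulVec_nonneg v

/-- Equality holds at `x = M⁻¹ v`: the gap is `(x - M⁻¹ v)ᵀ M (x - M⁻¹ v)`. -/
theorem two_mul_dotProduct_sub_le (hM : M.PosDef) (v x : m → ℝ) :
    2 * (x ⬝ᵥ v) - x ⬝ᵥ M *ᵥ x ≤ v ⬝ᵥ M⁻¹ *ᵥ v := by
  set y := M⁻¹ *ᵥ v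
  have hy : M *ᵥ y = v := hM.mulVec_inv_mulVec v
  have hsq : 0 ≤ (x - y) ⬝ᵥ M *ᵥ (x - y) := by
    simpa using hM.posSemidef.dotProduct_mulVec_nonneg (x - y)
  rw [mulVec_sub, dotProduct_sub, sub_dotProduct, sub_dotProduct, hy,
    hM.isHermitian.dotProduct_mulVec_comm y x, hy, dotProduct_comm y v] at hsq
  linarith

theorem dotProduct_inv_add_mulVec_le (hM : M.PosDef) {P : Matrix m m ℝ} (hP : P.PosSemidef)
    (v : m → ℝ) : v ⬝ᵥ (M + P)⁻¹ *ᵥ v ≤ v ⬝ᵥ M⁻¹ *ᵥ v := by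
  set x := (M + P)⁻¹ *ᵥ v
  have hx : (M + P) *ᵥ x = v := (hM.add_posSemidef hP).mulVec_inv_mulVec v
  have hPx : 0 ≤ x ⬝ᵥ P *ᵥ x := by simpa using hP.dotProduct_mulVec_nonneg x
  have hxv : x ⬝ᵥ M *ᵥ x + x ⬝ᵥ P *ᵥ x = x ⬝ᵥ v := by
    rw [← dotProduct_add, ← add_mulVec, hx]
  rw [dotProduct_comm]
  linarith [hM.two_mul_dotProduct_sub_le v x]

theorem log_det_add_vecMulVec_self (hM : M.PosDef) (v : m → ℝ) :
    Real.log (M + vecMulVec v v).det - Real.log M.det = Real.log (1 + v ⬝ᵥ M⁻¹ *ᵥ v) := by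
  rw [det_add_vecMulVec (isUnit_iff_ne_zero.mpr hM.det_pos.ne'),
    Real.log_mul hM.det_pos.ne' (by linarith [hM.dotProduct_inv_mulVec_nonneg v])]
  ring

end Matrix.PosDef

theorem Matrix.posSemidef_sum_vecMulVec_self {ι m : Type*} [Fintype m] (φ : ι → m → ℝ)
    (A : Finset ι) : (∑ i ∈ A, vecMulVec (φ i) (φ i)).PosSemidef :=
  posSemidef_sum A fun i _ => by simpa using posSemidef_vecMulVec_self_star (φ i)

noncomputable def infoMatrix {ι m : Type*} [DecidableEq m] (c : ℝ) (φ : ι → m → ℝ)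
    (A : Finset ι) : Matrix m m ℝ :=
  c • 1 + ∑ i ∈ A, vecMulVec (φ i) (φ i)

section InfoMatrix

variable {ι m : Type*} [DecidableEq m] {c : ℝ} (φ : ι → m → ℝ)

theorem infoMatrix_posDef [Fintype m] (hc : 0 < c) (A : Finset ι) :
    (infoMatrix c φ A).PosDef :=
  (PosDef.one.smul hc).add_posSemidef (posSemidef_sum_vecMulVec_self φ A)

variable [DecidableEq ι]

theorem infoMatrix_insert {k : ι} {A : Finset ι} (hk : k ∉ A) :
    infoMatrix c φ (insert k A) = infoMatrix c φ A + vecMulVec (φ k) (φ k) := by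
  rw [infoMatrix, infoMatrix, Finset.sum_insert hk]
  abel

theorem infoMatrix_eq_add_sdiff {S T : Finset ι} (hST : S ⊆ T) :
    infoMatrix c φ T = infoMatrix c φ S + ∑ i ∈ T \ S, vecMulVec (φ i) (φ i) := by
  rw [infoMatrix, infoMatrix, add_assoc, Finset.sum_sdiff_eq_sub hST]
  abel

theorem dotProduct_inv_infoMatrix_mulVec_antitone [Fintype m] (hc : 0 < c)
    {S T : Finset ι} (hST : S ⊆ T) (v : m → ℝ) :
    v ⬝ᵥ (infoMatrix c φ T)⁻¹ *ᵥ v ≤ v ⬝ᵥ (infoMatrix c φ S)⁻¹ *ᵥ v := by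
  rw [infoMatrix_eq_add_sdiff φ hST]
  exact (infoMatrix_posDef φ hc S).dotProduct_inv_add_mulVec_le
    (posSemidef_sum_vecMulVec_self φ _) v

end InfoMatrix

theorem stmt_3_general {n : ℕ} {ι : Type*} [DecidableEq ι]
    (c : ℝ) (hc : 0 < c) (φ : ι → Fin n → ℝ)
    (S T : Finset ι) (hST : S ⊆ T) (k : ι) (hk : k ∉ T)
    (fD : Finset ι → ℝ)
    (hfD : ∀ A : Finset ι, fD A = Real.log ((c • (1 : Matrix (Fin n) (Fin n) ℝ)
        + ∑ i ∈ A, vecMulVec (φ i) (φ i)).det)) :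
    fD (insert k T) - fD T ≤ fD (insert k S) - fD S := by
  have gain (A : Finset ι) (hA : k ∉ A) :
      fD (insert k A) - fD A = Real.log (1 + φ k ⬝ᵥ (infoMatrix c φ A)⁻¹ *ᵥ φ k) := by
    rw [hfD, hfD, ← infoMatrix, ← infoMatrix, infoMatrix_insert φ hA,
      (infoMatrix_posDef φ hc A).log_det_add_vecMulVec_self]
  rw [gain T hk, gain S fun hkS => hk (hST hkS)]
  gcongr
  · linarith [(infoMatrix_posDef φ hc T).dotProduct_inv_mulVec_nonneg (φ k)]
  · exact dotProduct_inv_infoMatrix_mulVec_antitone φ hc hST (φ k)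

/-- The D-optimality set function `f_D(S) = log det(cI + Σ_{i∈S} φᵢφᵢᵀ)` is
submodular: for `S ⊆ T` and `k ∉ T`,
`f_D(S ∪ {k}) - f_D(S) ≥ f_D(T ∪ {k}) - f_D(T)`. -/
theorem stmt_3 {n : ℕ} {ι : Type*} [Fintype ι] [DecidableEq ι]
    (c : ℝ) (hc : 0 < c) (φ : ι → Fin n → ℝ)
    (S T : Finset ι) (hST : S ⊆ T) (k : ι) (hk : k ∉ T)
    (fD : Finset ι → ℝ)
    (hfD : ∀ A : Finset ι, fD A = Real.log ((c • (1 : Matrix (Fin n) (Fin n) ℝ)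
        + ∑ i ∈ A, vecMulVec (φ i) (φ i)).det)) :
    fD (insert k T) - fD T ≤ fD (insert k S) - fD S :=
  stmt_3_general c hc φ S T hST k hk fD hfD
end

section
/- Let f be a monotone nondecreasing submodular set function on a finite ground set with f(∅) = 0, and let S_k be the set produced after k steps of the greedy algorithm that at each step adds the element with maximum marginal gain, subject to the cardinality constraint |S| = N. Then f(S_N) ≥ (1 - 1/e) · max_{|S|=N} f(S). -/
lemma marg_aux {U : Type*} [DecidableEq U] (f : Finset U → ℝ)
    (hmono : ∀ ⦃A B : Finset U⦄, A ⊆ B → f A ≤ f B)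
    (hsub : ∀ ⦃A B : Finset U⦄, A ⊆ B → ∀ x ∉ B,
      f (insert x B) - f B ≤ f (insert x A) - f A)
    (D A : Finset U) :
    f (A ∪ D) ≤ f A + ∑ x ∈ D, (f (insert x A) - f A) := by
  induction D using Finset.induction with
  | empty => simp
  | @insert a s hx ih =>
    rw [Finset.sum_insert hx]
    have h1 : A ∪ insert a s = insert a (A ∪ s) := by
      ext y; simp [or_left_comm]
    by_cases ha : a ∈ A ∪ s
    · rw [h1, Finset.insert_eq_self.2 ha]
      have h2 := hmono (Finset.subset_insert a A)
      linarith [ih]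
    · have h2 := hsub (Finset.subset_union_left (s₂ := s)) a ha
      rw [h1]
      linarith [ih]

/-- Nemhauser–Wolsey–Fisher guarantee: greedy maximization of a monotone
submodular set function `f` with `f(∅) = 0` subject to a cardinality
constraint `N` achieves at least `(1 - 1/e)` of the optimum. -/
theorem stmt_10 {U : Type*} [Fintype U] [DecidableEq U]
    (f : Finset U → ℝ)
    (hmono : ∀ ⦃A B : Finset U⦄, A ⊆ B → f A ≤ f B)
    (hsub : ∀ ⦃A B : Finset U⦄, A ⊆ B → ∀ x ∉ B,
      f (insert x B) - f B ≤ f (insert x A) - f A)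
    (hempty : f ∅ = 0)
    (N : ℕ) (hN : N ≤ Fintype.card U)
    (S : ℕ → Finset U) (hS0 : S 0 = ∅)
    (hgreedy : ∀ k < N, ∃ e ∉ S k, S (k + 1) = insert e (S k) ∧
      ∀ e' ∉ S k, f (insert e' (S k)) - f (S k) ≤ f (insert e (S k)) - f (S k)) :
    ∀ T : Finset U, T.card = N →
      (1 - 1 / Real.exp 1) * f T ≤ f (S N) := by
  intro T hT
  have hfT0 : 0 ≤ f T := by
    have := hmono (Finset.empty_subset T); linarith
  rcases Nat.eq_zero_or_pos N with h0 | hNpos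
  · subst h0
    rw [Finset.card_eq_zero] at hT
    subst hT
    simp [hS0, hempty]
  have hNr : (0:ℝ) < N := by exact_mod_cast hNpos
  -- per-step recurrence
  have step : ∀ k < N, f T - f (S (k+1)) ≤ (1 - 1/(N:ℝ)) * (f T - f (S k)) := by
    intro k hk
    obtain ⟨e, he, hSe, hmax⟩ := hgreedy k hk
    set δ := f (S (k+1)) - f (S k) with hδ
    have hδ0 : 0 ≤ δ := by
      rw [hδ, hSe]
      have := hmono (Finset.subset_insert e (S k)); linarith
    have key : f T - f (S k) ≤ (N:ℝ) * δ := by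
      have h1 : f T ≤ f (S k ∪ (T \ S k)) := by
        apply hmono
        intro x hx
        by_cases h : x ∈ S k <;> simp [h, hx]
      have h2 := marg_aux f hmono hsub (T \ S k) (S k)
      have h3 : ∑ x ∈ T \ S k, (f (insert x (S k)) - f (S k)) ≤ ((T \ S k).card : ℝ) * δ := by
        have := Finset.sum_le_card_nsmul (T \ S k)
          (fun x => f (insert x (S k)) - f (S k)) δ (by
            intro x hx
            have hxn : x ∉ S k := (Finset.mem_sdiff.1 hx).2
            have := hmax x hxn
            rw [hδ, hSe]; exact this)
        simpa [nsmul_eq_mul] using this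
      have h4 : ((T \ S k).card : ℝ) ≤ (N:ℝ) := by
        have : (T \ S k).card ≤ T.card := Finset.card_le_card Finset.sdiff_subset
        exact_mod_cast hT ▸ this
      nlinarith [h3, h4, hδ0]
    have hexp : (1 - 1/(N:ℝ)) * (f T - f (S k)) = (f T - f (S k)) - (f T - f (S k))/N := by
      ring
    have hdiv : (f T - f (S k))/(N:ℝ) ≤ δ := by
      rw [div_le_iff₀ hNr]; nlinarith [key]
    have heq : f T - f (S (k+1)) = (f T - f (S k)) - δ := by rw [hδ]; ring
    rw [heq, hexp]
    linarith
  have hone : 0 ≤ 1 - 1/(N:ℝ) := by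
    rw [sub_nonneg, div_le_one hNr]
    exact_mod_cast hNpos
  have main : ∀ k ≤ N, f T - f (S k) ≤ (1 - 1/(N:ℝ))^k * f T := by
    intro k
    induction k with
    | zero => intro _; simp [hS0, hempty]
    | succ k ih =>
      intro hk
      have hk' : k < N := hk
      have h1 := step k hk'
      have h2 := ih (le_of_lt hk')
      calc f T - f (S (k+1)) ≤ (1 - 1/(N:ℝ)) * (f T - f (S k)) := h1
        _ ≤ (1 - 1/(N:ℝ)) * ((1 - 1/(N:ℝ))^k * f T) :=
            mul_le_mul_of_nonneg_left h2 hone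
        _ = (1 - 1/(N:ℝ))^(k+1) * f T := by ring
  have hpow : (1 - 1/(N:ℝ))^N ≤ Real.exp (-1) := by
    have h1 : 1 - 1/(N:ℝ) ≤ Real.exp (-(1/(N:ℝ))) := by
      have := Real.add_one_le_exp (-(1/(N:ℝ)))
      linarith
    have h2 : (1 - 1/(N:ℝ))^N ≤ (Real.exp (-(1/(N:ℝ))))^N :=
      pow_le_pow_left₀ hone h1 N
    have h3 : (Real.exp (-(1/(N:ℝ))))^N = Real.exp ((N:ℝ) * (-(1/(N:ℝ)))) :=
      (Real.exp_nat_mul _ N).symm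
    have h4 : (N:ℝ) * (-(1/(N:ℝ))) = -1 := by field_simp
    rw [h3, h4] at h2
    exact h2
  have hmain := main N le_rfl
  have hfin : f T - f (S N) ≤ Real.exp (-1) * f T := by
    calc f T - f (S N) ≤ (1 - 1/(N:ℝ))^N * f T := hmain
      _ ≤ Real.exp (-1) * f T := mul_le_mul_of_nonneg_right hpow hfT0
  have hneg : Real.exp (-1) = 1 / Real.exp 1 := by
    rw [Real.exp_neg, one_div]
  rw [hneg] at hfin
  linarith
end

section
/- Let f be a monotone nondecreasing set function with f(∅)=0 and multiplicative weak-submodularity constant c_f ≥ 1, meaning that for all S ⊆ T and x ∉ T, f(T∪{x}) - f(T) ≤ c_f · (f(S∪{x}) - f(S)). Then the greedy algorithm selecting N elements by maximal marginal gain returns a set S^g with f(S^g) ≥ (1 - e^{-1/c_f}) · max_{|S|=N} f(S). -/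
/-!
Let `T` be any set of size `N` and `S k` the greedy sets. Weak submodularity bounds the gain of
adding all of `T` to `S k` by `c_f` times the sum of the individual marginal gains, hence by
`c_f N` times the greedy gain. So each greedy step closes at least a `1 / (c_f N)` fraction of the
gap `f T - f (S k)`, and after `N` steps the gap is at most `(1 - 1 / (c_f N)) ^ N f T ≤ e^{-1/c_f} f T`.
-/

open Finset

section WeaklySubmodular

variable {U : Type*} [DecidableEq U] (f : Finset U → ℝ) {c : ℝ}

def marginalGain (A : Finset U) (x : U) : ℝ := f (insert x A) - f A

variable {f}

theorem sub_le_mul_sum_marginalGain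
    (hweak : ∀ ⦃A B : Finset U⦄, A ⊆ B → ∀ x ∉ B,
      f (insert x B) - f B ≤ c * (f (insert x A) - f A))
    (A B : Finset U) :
    f (A ∪ B) - f A ≤ c * ∑ x ∈ B \ A, marginalGain f A x := by
  induction B using Finset.induction_on with
  | empty => simp
  | @insert x B hxB ih =>
    by_cases hxA : x ∈ A
    · rwa [union_insert, insert_eq_of_mem (mem_union_left B hxA), insert_sdiff_of_mem B hxA]
    · have hxAB : x ∉ A ∪ B := by simp [hxA, hxB]
      have hxBA : x ∉ B \ A := by simp [hxB]
      rw [union_insert, insert_sdiff_of_notMem B hxA, sum_insert hxBA, mul_add]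
      have : f (insert x (A ∪ B)) - f (A ∪ B) ≤ c * marginalGain f A x :=
        hweak subset_union_left x hxAB
      linarith

theorem sub_le_mul_card_mul_marginalGain
    (hmono : ∀ ⦃A B : Finset U⦄, A ⊆ B → f A ≤ f B) (hc : 0 ≤ c)
    (hweak : ∀ ⦃A B : Finset U⦄, A ⊆ B → ∀ x ∉ B,
      f (insert x B) - f B ≤ c * (f (insert x A) - f A))
    {A T : Finset U} {e : U} (hmax : ∀ x ∉ A, marginalGain f A x ≤ marginalGain f A e) :
    f T - f A ≤ c * #T * marginalGain f A e := by
  have hgain : 0 ≤ marginalGain f A e := sub_nonneg.2 (hmono (subset_insert e A))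
  have hsum : ∑ x ∈ T \ A, marginalGain f A x ≤ #T * marginalGain f A e :=
    calc ∑ x ∈ T \ A, marginalGain f A x ≤ #(T \ A) • marginalGain f A e :=
          sum_le_card_nsmul _ _ _ fun x hx => hmax x (mem_sdiff.1 hx).2
      _ ≤ #T * marginalGain f A e := by
          rw [nsmul_eq_mul]
          gcongr
          exact sdiff_subset
  calc f T - f A ≤ f (A ∪ T) - f A := by gcongr; exact hmono subset_union_right
    _ ≤ c * ∑ x ∈ T \ A, marginalGain f A x := sub_le_mul_sum_marginalGain hweak A T
    _ ≤ c * #T * marginalGain f A e := by rw [mul_assoc]; gcongr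

theorem sub_insert_le_one_sub_mul_of_isMax_marginalGain
    (hmono : ∀ ⦃A B : Finset U⦄, A ⊆ B → f A ≤ f B) (hc : 0 < c)
    (hweak : ∀ ⦃A B : Finset U⦄, A ⊆ B → ∀ x ∉ B,
      f (insert x B) - f B ≤ c * (f (insert x A) - f A))
    {A T : Finset U} (hT : T.Nonempty) {e : U}
    (hmax : ∀ x ∉ A, marginalGain f A x ≤ marginalGain f A e) :
    f T - f (insert e A) ≤ (1 - 1 / c / #T) * (f T - f A) := by
  have hcT : 0 < c * #T := by have := hT.card_pos; positivity
  have hgap := sub_le_mul_card_mul_marginalGain hmono hc.le hweak (T := T) hmax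
  have : (f T - f A) / (c * #T) ≤ marginalGain f A e := (div_le_iff₀' hcT).2 hgap
  calc f T - f (insert e A) = (f T - f A) - marginalGain f A e := by unfold marginalGain; ring
    _ ≤ (f T - f A) - (f T - f A) / (c * #T) := by linarith
    _ = (1 - 1 / c / #T) * (f T - f A) := by field_simp

end WeaklySubmodular

theorem stmt_11_general {U : Type*} [DecidableEq U]
    (f : Finset U → ℝ)
    (hmono : ∀ ⦃A B : Finset U⦄, A ⊆ B → f A ≤ f B)
    (hempty : f ∅ = 0)
    (cf : ℝ) (hcf : 1 ≤ cf)
    (hweak : ∀ ⦃A B : Finset U⦄, A ⊆ B → ∀ x ∉ B,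
      f (insert x B) - f B ≤ cf * (f (insert x A) - f A))
    (N : ℕ)
    (S : ℕ → Finset U) (hS0 : S 0 = ∅)
    (hgreedy : ∀ k < N, ∃ e ∉ S k, S (k + 1) = insert e (S k) ∧
      ∀ e' ∉ S k, f (insert e' (S k)) - f (S k) ≤ f (insert e (S k)) - f (S k)) :
    ∀ T : Finset U, T.card = N →
      (1 - Real.exp (-1 / cf)) * f T ≤ f (S N) := by
  intro T hT
  have hc : 0 < cf := by linarith
  have hfT : 0 ≤ f T := hempty ▸ hmono T.empty_subset
  obtain rfl | hN := Nat.eq_zero_or_pos N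
  · simp [card_eq_zero.1 hT, hS0, hempty]
  have hcN : 1 / cf ≤ N := by
    calc 1 / cf ≤ 1 := by rw [div_le_one hc]; exact hcf
      _ ≤ N := by exact_mod_cast hN
  have hr : 0 ≤ 1 - 1 / cf / N := by
    rw [sub_nonneg, div_le_one (by positivity)]; exact hcN
  have hgap : f T - f (S N) ≤ (1 - 1 / cf / N) ^ N * (f T - f (S 0)) :=
    le_geom (u := fun k => f T - f (S k)) hr N fun k hk => by
      obtain ⟨e, -, hSk, hmax⟩ := hgreedy k hk
      rw [hSk, ← hT]
      exact sub_insert_le_one_sub_mul_of_isMax_marginalGain hmono hc hweak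
        (card_pos.1 (hT ▸ hN)) hmax
  have hpow : (1 - 1 / cf / N) ^ N ≤ Real.exp (-1 / cf) := by
    rw [neg_div]; exact Real.one_sub_div_pow_le_exp_neg hcN
  rw [hS0, hempty, sub_zero] at hgap
  nlinarith [mul_le_mul_of_nonneg_right hpow hfT]

/-- Greedy guarantee for weakly submodular functions with multiplicative
constant `c_f ≥ 1`: the greedy set `S^g` of size `N` satisfies
`f(S^g) ≥ (1 - e^{-1/c_f}) · max_{|S|=N} f(S)`. -/
theorem stmt_11 {U : Type*} [Fintype U] [DecidableEq U]
    (f : Finset U → ℝ)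
    (hmono : ∀ ⦃A B : Finset U⦄, A ⊆ B → f A ≤ f B)
    (hempty : f ∅ = 0)
    (cf : ℝ) (hcf : 1 ≤ cf)
    (hweak : ∀ ⦃A B : Finset U⦄, A ⊆ B → ∀ x ∉ B,
      f (insert x B) - f B ≤ cf * (f (insert x A) - f A))
    (N : ℕ) (hN : N ≤ Fintype.card U)
    (S : ℕ → Finset U) (hS0 : S 0 = ∅)
    (hgreedy : ∀ k < N, ∃ e ∉ S k, S (k + 1) = insert e (S k) ∧
      ∀ e' ∉ S k, f (insert e' (S k)) - f (S k) ≤ f (insert e (S k)) - f (S k)) :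
    ∀ T : Finset U, T.card = N →
      (1 - Real.exp (-1 / cf)) * f T ≤ f (S N) :=
  stmt_11_general f hmono hempty cf hcf hweak N S hS0 hgreedy
end
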